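/- Let T be a binary search tree and let D ⊆ V(T). Let T' be a tree obtained from T by applying BulkDelete(D), with the deletions performed in any order. Then for every node x of T', the signature σ_{T'}(x) is a prefix of σ_T(x); in particular, h(T') ≤ h(T). -/
import Mathlib


attribute [local instance] Classical.propDecidable

/-- A binary tree with real-number node values. -/
inductive BT : Type
  | leaf : BT
  | node : BT → ℝ → BT → BT

namespace BT

/-- The set of values stored in the tree. -/
noncomputable def nodes : BT → Finset ℝ
  | .leaf => ∅
  | .node l v r => insert v (nodes l ∪ nodes r)

/-- The signature of `x` in the tree: the bit string of the search path for `x`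
(`false` = step to a left child, `true` = step to a right child). For a node `x` of the
tree, its length is the depth `d_T(x)`. -/
noncomputable def sig : BT → ℝ → List Bool
  | .leaf, _ => []
  | .node l v r, x =>
    if x < v then false :: sig l x
    else if v < x then true :: sig r x
    else []

/-- The number of nodes of the tree. -/
def size : BT → ℕ
  | .leaf => 0
  | .node l _ r => size l + size r + 1

/-- The binary-search-tree property: all values in a left subtree are smaller than the
value at the node, all values in a right subtree are larger. -/
def isBST : BT → Prop
  | .leaf => True
  | .node l v r => (∀ x ∈ nodes l, x < v) ∧ (∀ x ∈ nodes r, v < x) ∧ isBST l ∧ isBST r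

/-- The height of the tree: the maximum depth of a node (0 for the empty tree). -/
noncomputable def height (t : BT) : ℕ := (nodes t).sup fun x => (sig t x).length

/-- The subtree rooted at the node holding the value `x` (a leaf if `x` is absent). -/
noncomputable def subtreeAt : BT → ℝ → BT
  | .leaf, _ => .leaf
  | .node l v r, x =>
    if x < v then subtreeAt l x
    else if v < x then subtreeAt r x
    else .node l v r

end BT

namespace BT

/-- Delete the largest value of the tree (following the recursive deletion rule) and
return it together with the remaining tree. -/
noncomputable def extractMax : BT → Option (ℝ × BT)
  | .leaf => none
  | .node l v .leaf =>
    match extractMax l with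
    | none => some (v, .leaf)
    | some (m, l') => some (v, .node l' m .leaf)
  | .node l v (.node rl rv rr) =>
    match extractMax (.node rl rv rr) with
    | none => some (v, l)
    | some (m, r') => some (m, .node l v r')

/-- Delete the smallest value of the tree (following the recursive deletion rule) and
return it together with the remaining tree. -/
noncomputable def extractMin : BT → Option (ℝ × BT)
  | .leaf => none
  | .node .leaf v r =>
    match extractMin r with
    | none => some (v, .leaf)
    | some (m, r') => some (v, .node .leaf m r')
  | .node (.node ll lv lr) v r =>
    match extractMin (.node ll lv lr) with
    | none => some (v, r)
    | some (m, l') => some (m, .node l' v r)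

/-- Recursive deletion of the value `x`: if the node holding `x` is a leaf, remove it;
otherwise, if it has a left child, recursively delete the largest value of its left
subtree and replace `x` with it; otherwise recursively delete the smallest value of its
right subtree and replace `x` with it. -/
noncomputable def delete : BT → ℝ → BT
  | .leaf, _ => .leaf
  | .node l v r, x =>
    if x < v then .node (delete l x) v r
    else if v < x then .node l v (delete r x)
    else
      match extractMax l with
      | some (m, l') => .node l' m r
      | none =>
        match extractMin r with
        | some (m, r') => .node .leaf m r'
        | none => .leaf

end BT

namespace BT

lemma mem_nodes_node {y v : ℝ} {l r : BT} :
    y ∈ nodes (node l v r) ↔ y = v ∨ y ∈ nodes l ∨ y ∈ nodes r := by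
  simp [nodes]

lemma not_mem_nodes_leaf {y : ℝ} : y ∉ nodes leaf := by simp [nodes]

lemma extractMax_ne_none (l : BT) (v : ℝ) (r : BT) : extractMax (.node l v r) ≠ none := by
  cases r with
  | leaf => cases h : extractMax l <;> simp [extractMax, h]
  | node rl rv rr => cases h : extractMax (node rl rv rr) <;> simp [extractMax, h]

lemma extractMin_ne_none (l : BT) (v : ℝ) (r : BT) : extractMin (.node l v r) ≠ none := by
  cases l with
  | leaf => cases h : extractMin r <;> simp [extractMin, h]
  | node ll lv lr => cases h : extractMin (node ll lv lr) <;> simp [extractMin, h]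

lemma extractMax_spec : ∀ (t : BT) (m : ℝ) (t' : BT), isBST t →
    extractMax t = some (m, t') →
    m ∈ nodes t ∧ nodes t' ⊆ nodes t ∧ isBST t' ∧ (∀ y ∈ nodes t', y < m) ∧
    (∀ y ∈ nodes t', sig t' y <+: sig t y) := by
  intro t
  induction t with
  | leaf => intro m t' _ h; simp [extractMax] at h
  | node l v r ihl ihr =>
    intro m t' hbst heq
    obtain ⟨hlv, hvr, hbl, hbr⟩ := hbst
    cases r with
    | leaf =>
      cases hl : extractMax l with
      | none =>
        rw [extractMax, hl] at heq
        simp only [Option.some.injEq, Prod.mk.injEq] at heq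
        obtain ⟨rfl, rfl⟩ := heq
        exact ⟨mem_nodes_node.mpr (Or.inl rfl),
          fun y hy => absurd hy not_mem_nodes_leaf, trivial,
          fun y hy => absurd hy not_mem_nodes_leaf,
          fun y hy => absurd hy not_mem_nodes_leaf⟩
      | some p =>
        obtain ⟨m', l'⟩ := p
        rw [extractMax, hl] at heq
        simp only [Option.some.injEq, Prod.mk.injEq] at heq
        obtain ⟨rfl, rfl⟩ := heq
        obtain ⟨hm'mem, hsub, hbst', hmax, hpre⟩ := ihl m' l' hbl hl
        have hm'v : m' < v := hlv m' hm'mem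
        refine ⟨mem_nodes_node.mpr (Or.inl rfl), ?_, ?_, ?_, ?_⟩
        · intro y hy
          rw [mem_nodes_node] at hy
          rcases hy with rfl | hy | hy
          · exact mem_nodes_node.mpr (Or.inr (Or.inl hm'mem))
          · exact mem_nodes_node.mpr (Or.inr (Or.inl (hsub hy)))
          · exact absurd hy not_mem_nodes_leaf
        · exact ⟨hmax, fun x hx => absurd hx not_mem_nodes_leaf, hbst', trivial⟩
        · intro y hy
          rw [mem_nodes_node] at hy
          rcases hy with rfl | hy | hy
          · exact hm'v
          · exact lt_trans (hmax y hy) hm'v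
          · exact absurd hy not_mem_nodes_leaf
        · intro y hy
          rw [mem_nodes_node] at hy
          rcases hy with rfl | hy | hy
          · simp [sig]
          · have hym' : y < m' := hmax y hy
            have hyv : y < v := lt_trans hym' hm'v
            simp only [sig, if_pos hym', if_pos hyv]
            exact List.cons_prefix_cons.mpr ⟨rfl, hpre y hy⟩
          · exact absurd hy not_mem_nodes_leaf
    | node rl rv rr =>
      cases hr : extractMax (node rl rv rr) with
      | none => exact absurd hr (extractMax_ne_none _ _ _)
      | some p =>
        obtain ⟨m', r'⟩ := p
        rw [extractMax, hr] at heq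
        simp only [Option.some.injEq, Prod.mk.injEq] at heq
        obtain ⟨hm, rfl⟩ := heq
        subst hm
        obtain ⟨hmmem, hsub, hbst', hmax, hpre⟩ := ihr m' r' hbr hr
        have hvm : v < m' := hvr m' hmmem
        refine ⟨mem_nodes_node.mpr (Or.inr (Or.inr hmmem)), ?_, ?_, ?_, ?_⟩
        · intro y hy
          rw [mem_nodes_node] at hy ⊢
          rcases hy with rfl | hy | hy
          · exact Or.inl rfl
          · exact Or.inr (Or.inl hy)
          · exact Or.inr (Or.inr (hsub hy))
        · exact ⟨hlv, fun x hx => hvr x (hsub hx), hbl, hbst'⟩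
        · intro y hy
          rw [mem_nodes_node] at hy
          rcases hy with rfl | hy | hy
          · exact hvm
          · exact lt_trans (hlv y hy) hvm
          · exact hmax y hy
        · intro y hy
          rw [mem_nodes_node] at hy
          rcases hy with rfl | hy | hy
          · simp [sig]
          · have hyv : y < v := hlv y hy
            simp only [sig, if_pos hyv]
            exact List.prefix_refl _
          · have hvy : v < y := hvr y (hsub hy)
            have hny : ¬ y < v := not_lt.mpr hvy.le
            simp only [sig, if_neg hny, if_pos hvy]
            exact List.cons_prefix_cons.mpr ⟨rfl, hpre y hy⟩

lemma extractMin_spec : ∀ (t : BT) (m : ℝ) (t' : BT), isBST t →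
    extractMin t = some (m, t') →
    m ∈ nodes t ∧ nodes t' ⊆ nodes t ∧ isBST t' ∧ (∀ y ∈ nodes t', m < y) ∧
    (∀ y ∈ nodes t', sig t' y <+: sig t y) := by
  intro t
  induction t with
  | leaf => intro m t' _ h; simp [extractMin] at h
  | node l v r ihl ihr =>
    intro m t' hbst heq
    obtain ⟨hlv, hvr, hbl, hbr⟩ := hbst
    cases l with
    | leaf =>
      cases hrr : extractMin r with
      | none =>
        rw [extractMin, hrr] at heq
        simp only [Option.some.injEq, Prod.mk.injEq] at heq
        obtain ⟨rfl, rfl⟩ := heq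
        exact ⟨mem_nodes_node.mpr (Or.inl rfl),
          fun y hy => absurd hy not_mem_nodes_leaf, trivial,
          fun y hy => absurd hy not_mem_nodes_leaf,
          fun y hy => absurd hy not_mem_nodes_leaf⟩
      | some p =>
        obtain ⟨m', r'⟩ := p
        rw [extractMin, hrr] at heq
        simp only [Option.some.injEq, Prod.mk.injEq] at heq
        obtain ⟨rfl, rfl⟩ := heq
        obtain ⟨hm'mem, hsub, hbst', hmin, hpre⟩ := ihr m' r' hbr hrr
        have hvm' : v < m' := hvr m' hm'mem
        refine ⟨mem_nodes_node.mpr (Or.inl rfl), ?_, ?_, ?_, ?_⟩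
        · intro y hy
          rw [mem_nodes_node] at hy
          rcases hy with rfl | hy | hy
          · exact mem_nodes_node.mpr (Or.inr (Or.inr hm'mem))
          · exact absurd hy not_mem_nodes_leaf
          · exact mem_nodes_node.mpr (Or.inr (Or.inr (hsub hy)))
        · exact ⟨fun x hx => absurd hx not_mem_nodes_leaf, hmin, trivial, hbst'⟩
        · intro y hy
          rw [mem_nodes_node] at hy
          rcases hy with rfl | hy | hy
          · exact hvm'
          · exact absurd hy not_mem_nodes_leaf
          · exact lt_trans hvm' (hmin y hy)
        · intro y hy
          rw [mem_nodes_node] at hy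
          rcases hy with rfl | hy | hy
          · simp [sig]
          · exact absurd hy not_mem_nodes_leaf
          · have hm'y : m' < y := hmin y hy
            have hvy : v < y := lt_trans hvm' hm'y
            have h1 : ¬ y < m' := not_lt.mpr hm'y.le
            have h2 : ¬ y < v := not_lt.mpr hvy.le
            simp only [sig, if_neg h1, if_pos hm'y, if_neg h2, if_pos hvy]
            exact List.cons_prefix_cons.mpr ⟨rfl, hpre y hy⟩
    | node ll lv lr =>
      cases hl : extractMin (node ll lv lr) with
      | none => exact absurd hl (extractMin_ne_none _ _ _)
      | some p =>
        obtain ⟨m', l'⟩ := p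
        rw [extractMin, hl] at heq
        simp only [Option.some.injEq, Prod.mk.injEq] at heq
        obtain ⟨hm, rfl⟩ := heq
        subst hm
        obtain ⟨hmmem, hsub, hbst', hmin, hpre⟩ := ihl m' l' hbl hl
        have hmv : m' < v := hlv m' hmmem
        refine ⟨mem_nodes_node.mpr (Or.inr (Or.inl hmmem)), ?_, ?_, ?_, ?_⟩
        · intro y hy
          rw [mem_nodes_node] at hy ⊢
          rcases hy with rfl | hy | hy
          · exact Or.inl rfl
          · exact Or.inr (Or.inl (hsub hy))
          · exact Or.inr (Or.inr hy)
        · exact ⟨fun x hx => hlv x (hsub hx), hvr, hbst', hbr⟩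
        · intro y hy
          rw [mem_nodes_node] at hy
          rcases hy with rfl | hy | hy
          · exact hmv
          · exact hmin y hy
          · exact lt_trans hmv (hvr y hy)
        · intro y hy
          rw [mem_nodes_node] at hy
          rcases hy with rfl | hy | hy
          · simp [sig]
          · have hyv : y < v := hlv y (hsub hy)
            simp only [sig, if_pos hyv]
            exact List.cons_prefix_cons.mpr ⟨rfl, hpre y hy⟩
          · have hvy : v < y := hvr y hy
            have hny : ¬ y < v := not_lt.mpr hvy.le
            simp only [sig, if_neg hny, if_pos hvy]
            exact List.prefix_refl _

lemma delete_spec : ∀ (t : BT) (x : ℝ), isBST t →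
    isBST (delete t x) ∧ nodes (delete t x) ⊆ nodes t ∧
    (∀ y ∈ nodes (delete t x), sig (delete t x) y <+: sig t y) := by
  intro t x
  induction t with
  | leaf =>
    intro _
    exact ⟨trivial, fun y hy => absurd hy not_mem_nodes_leaf,
      fun y hy => absurd hy not_mem_nodes_leaf⟩
  | node l v r ihl ihr =>
    intro hbst
    obtain ⟨hlv, hvr, hbl, hbr⟩ := hbst
    rcases lt_trichotomy x v with hxv | hxv | hxv
    · obtain ⟨hb', hsub', hpre'⟩ := ihl hbl
      have hd : delete (node l v r) x = node (delete l x) v r := by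
        rw [delete, if_pos hxv]
      rw [hd]
      refine ⟨⟨fun z hz => hlv z (hsub' hz), hvr, hb', hbr⟩, ?_, ?_⟩
      · intro y hy
        rw [mem_nodes_node] at hy ⊢
        rcases hy with rfl | hy | hy
        · exact Or.inl rfl
        · exact Or.inr (Or.inl (hsub' hy))
        · exact Or.inr (Or.inr hy)
      · intro y hy
        rw [mem_nodes_node] at hy
        rcases hy with rfl | hy | hy
        · simp [sig]
        · have hyv : y < v := hlv y (hsub' hy)
          simp only [sig, if_pos hyv]
          exact List.cons_prefix_cons.mpr ⟨rfl, hpre' y hy⟩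
        · have hvy : v < y := hvr y hy
          have hny : ¬ y < v := not_lt.mpr hvy.le
          simp only [sig, if_neg hny, if_pos hvy]
          exact List.prefix_refl _
    · subst hxv
      have hnx : ¬ x < x := lt_irrefl x
      cases hl : extractMax l with
      | some p =>
        obtain ⟨m, l'⟩ := p
        have hd : delete (node l x r) x = node l' m r := by
          rw [delete, if_neg hnx, if_neg hnx, hl]
        rw [hd]
        obtain ⟨hmmem, hsub, hbst', hmax, hpre⟩ := extractMax_spec l m l' hbl hl
        have hmv : m < x := hlv m hmmem
        refine ⟨⟨hmax, fun z hz => lt_trans hmv (hvr z hz), hbst', hbr⟩, ?_, ?_⟩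
        · intro y hy
          rw [mem_nodes_node] at hy ⊢
          rcases hy with rfl | hy | hy
          · exact Or.inr (Or.inl hmmem)
          · exact Or.inr (Or.inl (hsub hy))
          · exact Or.inr (Or.inr hy)
        · intro y hy
          rw [mem_nodes_node] at hy
          rcases hy with rfl | hy | hy
          · simp [sig]
          · have hym : y < m := hmax y hy
            have hyx : y < x := lt_trans hym hmv
            simp only [sig, if_pos hym, if_pos hyx]
            exact List.cons_prefix_cons.mpr ⟨rfl, hpre y hy⟩
          · have hxy : x < y := hvr y hy
            have hmy : m < y := lt_trans hmv hxy
            have h1 : ¬ y < m := not_lt.mpr hmy.le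
            have h2 : ¬ y < x := not_lt.mpr hxy.le
            simp only [sig, if_neg h1, if_pos hmy, if_neg h2, if_pos hxy]
            exact List.prefix_refl _
      | none =>
        cases hrr : extractMin r with
        | some p =>
          obtain ⟨m, r'⟩ := p
          have hd : delete (node l x r) x = node .leaf m r' := by
            rw [delete, if_neg hnx, if_neg hnx, hl, hrr]
          rw [hd]
          obtain ⟨hmmem, hsub, hbst', hmin, hpre⟩ := extractMin_spec r m r' hbr hrr
          have hxm : x < m := hvr m hmmem
          refine ⟨⟨fun z hz => absurd hz not_mem_nodes_leaf, hmin, trivial, hbst'⟩, ?_, ?_⟩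
          · intro y hy
            rw [mem_nodes_node] at hy ⊢
            rcases hy with rfl | hy | hy
            · exact Or.inr (Or.inr hmmem)
            · exact absurd hy not_mem_nodes_leaf
            · exact Or.inr (Or.inr (hsub hy))
          · intro y hy
            rw [mem_nodes_node] at hy
            rcases hy with rfl | hy | hy
            · simp [sig]
            · exact absurd hy not_mem_nodes_leaf
            · have hmy : m < y := hmin y hy
              have hxy : x < y := lt_trans hxm hmy
              have h1 : ¬ y < m := not_lt.mpr hmy.le
              have h2 : ¬ y < x := not_lt.mpr hxy.le
              simp only [sig, if_neg h1, if_pos hmy, if_neg h2, if_pos hxy]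
              exact List.cons_prefix_cons.mpr ⟨rfl, hpre y hy⟩
        | none =>
          have hd : delete (node l x r) x = .leaf := by
            rw [delete, if_neg hnx, if_neg hnx, hl, hrr]
          rw [hd]
          exact ⟨trivial, fun y hy => absurd hy not_mem_nodes_leaf,
            fun y hy => absurd hy not_mem_nodes_leaf⟩
    · obtain ⟨hb', hsub', hpre'⟩ := ihr hbr
      have hnx : ¬ x < v := not_lt.mpr hxv.le
      have hd : delete (node l v r) x = node l v (delete r x) := by
        rw [delete, if_neg hnx, if_pos hxv]
      rw [hd]
      refine ⟨⟨hlv, fun z hz => hvr z (hsub' hz), hbl, hb'⟩, ?_, ?_⟩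
      · intro y hy
        rw [mem_nodes_node] at hy ⊢
        rcases hy with rfl | hy | hy
        · exact Or.inl rfl
        · exact Or.inr (Or.inl hy)
        · exact Or.inr (Or.inr (hsub' hy))
      · intro y hy
        rw [mem_nodes_node] at hy
        rcases hy with rfl | hy | hy
        · simp [sig]
        · have hyv : y < v := hlv y hy
          simp only [sig, if_pos hyv]
          exact List.prefix_refl _
        · have hvy : v < y := hvr y (hsub' hy)
          have hny : ¬ y < v := not_lt.mpr hvy.le
          simp only [sig, if_neg hny, if_pos hvy]
          exact List.cons_prefix_cons.mpr ⟨rfl, hpre' y hy⟩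

lemma foldl_delete_spec : ∀ (L : List ℝ) (t : BT), isBST t →
    isBST (L.foldl delete t) ∧ nodes (L.foldl delete t) ⊆ nodes t ∧
    (∀ y ∈ nodes (L.foldl delete t), sig (L.foldl delete t) y <+: sig t y) := by
  intro L
  induction L with
  | nil => intro t ht; exact ⟨ht, fun y hy => hy, fun y _ => List.prefix_refl _⟩
  | cons a L ih =>
    intro t ht
    obtain ⟨hb1, hsub1, hpre1⟩ := delete_spec t a ht
    obtain ⟨hb2, hsub2, hpre2⟩ := ih (delete t a) hb1
    refine ⟨hb2, fun y hy => hsub1 (hsub2 hy), fun y hy => ?_⟩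
    exact (hpre2 y hy).trans (hpre1 y (hsub2 hy))

end BT

/-- `t'` is obtained from `t` by `BulkDelete(D)`: deleting the elements of the finite
set `D` one by one, in some order. -/
def BulkDeleteRel (t : BT) (D : Finset ℝ) (t' : BT) : Prop :=
  ∃ l : List ℝ, l.Nodup ∧ l.toFinset = D ∧ t' = l.foldl BT.delete t

/-- bulk deletion and signatures: if `T'` is obtained from `T` by
`BulkDelete(D)` (deletions performed in any order), then for every node `x` of `T'` the
signature `σ_{T'}(x)` is a prefix of `σ_T(x)`; in particular `h(T') ≤ h(T)`. -/
theorem bulkDelete_sig_prefix (t : BT) (ht : t.isBST)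
    (D : Finset ℝ) (hD : D ⊆ t.nodes)
    (t' : BT) (h' : BulkDeleteRel t D t') :
    (∀ x ∈ t'.nodes, t'.sig x <+: t.sig x) ∧ t'.height ≤ t.height := by
  obtain ⟨L, -, -, rfl⟩ := h'
  obtain ⟨-, hsub, hpre⟩ := BT.foldl_delete_spec L t ht
  refine ⟨hpre, ?_⟩
  apply Finset.sup_le
  intro x hx
  calc (BT.sig (L.foldl BT.delete t) x).length
      ≤ (BT.sig t x).length := (hpre x hx).length_le
    _ ≤ t.height := Finset.le_sup (f := fun x => (BT.sig t x).length) (hsub hx)
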